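/- Relative to any fixed ordering of the edges of T_m: for every odd integer m ≥ 1, sgn(π_20) = sgn(π_02); for m = 1, sgn(π′_11) = −sgn(π_02); and for every even integer m ≥ 2, sgn(ρ_02) = sgn(ρ_20). -/
import Mathlib


namespace FLL

/-- Flags of the thread `T_m` (obtained from the path `v_0 e_0 v_1 e_1 ⋯ e_m v_{m+1}`
by adding feet `f_{k+1} = v_{k+1} w_{k+1}` for `k = 0, …, m-1`):
* `vLeft k`  is the flag `(v_k, e_k)` for `0 ≤ k ≤ m`;
* `vRight k` is the flag `(v_{k+1}, e_k)` for `0 ≤ k ≤ m`;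
* `vFoot k`  is the flag `(v_{k+1}, f_{k+1})` for `0 ≤ k ≤ m-1`;
* `wFoot k`  is the flag `(w_{k+1}, f_{k+1})` for `0 ≤ k ≤ m-1`. -/
inductive ThreadFlag (m : ℕ) where
  | vLeft (k : Fin (m+1))
  | vRight (k : Fin (m+1))
  | vFoot (k : Fin m)
  | wFoot (k : Fin m)
deriving DecidableEq

/-- Edges of the thread `T_m`: `e k` is the path edge `e_k` (`0 ≤ k ≤ m`),
`f k` is the foot edge `f_{k+1}` (`0 ≤ k ≤ m-1`). -/
inductive ThreadEdge (m : ℕ) where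
  | e (k : Fin (m+1))
  | f (k : Fin m)
deriving DecidableEq

namespace Thread

variable {m : ℕ}

/-- A prestar labelling of `T_m`: a function from the flags to `{0,1,2}` whose
restriction to the three flags at the internal vertex `v_{k+1}` (`0 ≤ k ≤ m-1`)
is a bijection onto `{0,1,2}`. -/
def IsPrestar (π : ThreadFlag m → Fin 3) : Prop :=
  ∀ k : Fin m,
    π (.vRight k.castSucc) ≠ π (.vLeft k.succ) ∧
    π (.vRight k.castSucc) ≠ π (.vFoot k) ∧
    π (.vLeft k.succ) ≠ π (.vFoot k)

/-- The exponent of a prestar labelling: `w(e) = π(ue) + π(ve)` for each edge `e = uv`. -/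
def texp (π : ThreadFlag m → Fin 3) : ThreadEdge m → ℕ
  | .e k => (π (.vLeft k) : ℕ) + (π (.vRight k) : ℕ)
  | .f k => (π (.vFoot k) : ℕ) + (π (.wFoot k) : ℕ)

/-- A prestar labelling is 1-footed if every foot flag `w_k f_k` is labelled `1`. -/
def OneFooted (π : ThreadFlag m → Fin 3) : Prop := ∀ k : Fin m, π (.wFoot k) = 1

/-- The constant weighting `w_𝟐 ≡ 2`. -/
def w2 : ThreadEdge m → ℕ := fun _ => 2

/-- The weighting `w_11` (for `m ≥ 1`): as `w_𝟐` except `w(e_0) = 1`, `w(e_m) = 3`. -/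
def w11 : ThreadEdge m → ℕ
  | .e k => if (k : ℕ) = 0 then 1 else if (k : ℕ) = m then 3 else 2
  | .f _ => 2

/-- The weighting `w_02` (for `m ≥ 1`): as `w_𝟐` except `w(e_0) = 1`, `w(f_1) = 3`. -/
def w02 : ThreadEdge m → ℕ
  | .e k => if (k : ℕ) = 0 then 1 else 2
  | .f k => if (k : ℕ) = 0 then 3 else 2

/-- The weighting `w_20` (for `m ≥ 1`): as `w_𝟐` except `w(e_0) = 3`, `w(e_1) = 0`,
`w(f_1) = 3`. -/
def w20 : ThreadEdge m → ℕ
  | .e k => if (k : ℕ) = 0 then 3 else if (k : ℕ) = 1 then 0 else 2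
  | .f k => if (k : ℕ) = 0 then 3 else 2

/-- The 1-footed prestar labelling `ρ_02`. -/
def rho02 : ThreadFlag m → Fin 3
  | .vLeft _ => 0
  | .vRight _ => 2
  | .vFoot _ => 1
  | .wFoot _ => 1

/-- The 1-footed prestar labelling `ρ_20`. -/
def rho20 : ThreadFlag m → Fin 3
  | .vLeft _ => 2
  | .vRight _ => 0
  | .vFoot _ => 1
  | .wFoot _ => 1

/-- The prestar labelling `ρ_11` of the trivial thread `T_0` (both flags labelled 1). -/
def rho11 : ThreadFlag m → Fin 3 := fun _ => 1

/-- The 1-footed prestar labelling `π_11` (for `m ≥ 1`). -/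
def pi11 : ThreadFlag m → Fin 3
  | .vLeft k => if (k : ℕ) = 0 then 1 else 2
  | .vRight k => if (k : ℕ) = m then 1 else 0
  | .vFoot _ => 1
  | .wFoot _ => 1

/-- The 1-footed prestar labelling `π_02` (for `m ≥ 1`). -/
def pi02 : ThreadFlag m → Fin 3
  | .vLeft _ => 0
  | .vRight k => if (k : ℕ) = 0 then 1 else 2
  | .vFoot k => if (k : ℕ) = 0 then 2 else 1
  | .wFoot _ => 1

/-- The 1-footed prestar labelling `π_20` (for `m ≥ 1`). -/
def pi20 : ThreadFlag m → Fin 3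
  | .vLeft k => if (k : ℕ) = 1 then 0 else 2
  | .vRight k => if (k : ℕ) = 0 then 1 else 0
  | .vFoot k => if (k : ℕ) = 0 then 2 else 1
  | .wFoot _ => 1

/-- The exceptional 1-footed prestar labelling `π′_11` of `T_1`. -/
def pi'11 : ThreadFlag m → Fin 3
  | .vLeft _ => 1
  | .vRight k => if (k : ℕ) = 0 then 0 else 1
  | .vFoot _ => 2
  | .wFoot _ => 1

/-- Sign contribution of one pair of (edge, label) data, relative to an edge ordering. -/
def psign (ord : ThreadEdge m → ℕ) (a b : ThreadEdge m) (x y : Fin 3) : ℤ :=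
  if ord a < ord b then ((y : ℤ) - (x : ℤ)).sign else ((x : ℤ) - (y : ℤ)).sign

/-- The sign of the star labelling at the internal vertex `v_{k+1}`: the sign of the
permutation of `{0,1,2}` given by the labels of the three flags at `v_{k+1}` taken in
increasing edge order (computed as a product over the three pairs of flags). -/
def vsgn (ord : ThreadEdge m → ℕ) (π : ThreadFlag m → Fin 3) (k : Fin m) : ℤ :=
  psign ord (.e k.castSucc) (.e k.succ) (π (.vRight k.castSucc)) (π (.vLeft k.succ)) *
  psign ord (.e k.castSucc) (.f k) (π (.vRight k.castSucc)) (π (.vFoot k)) *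
  psign ord (.e k.succ) (.f k) (π (.vLeft k.succ)) (π (.vFoot k))

/-- The sign of a prestar labelling of `T_m`: `sgn(π) = ∏_{k=1}^m sgn(π_{v_k})`. -/
def psgn (ord : ThreadEdge m → ℕ) (π : ThreadFlag m → Fin 3) : ℤ :=
  ∏ k : Fin m, vsgn ord π k

end Thread
end FLL

open FLL FLL.Thread

section Aux
open FLL FLL.Thread

lemma vsgn_pi20_pi02 {m : ℕ} (ord : ThreadEdge m → ℕ) (k : Fin m) :
    vsgn ord (pi20 (m := m)) k = (if (k : ℕ) = 0 then 1 else -1) * vsgn ord (pi02 (m := m)) k := by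
  by_cases hk : (k : ℕ) = 0
  · simp only [vsgn, pi20, pi02, psign, Fin.coe_castSucc, Fin.val_succ, hk, if_pos rfl]
    norm_num
  · have h1 : (k : ℕ) + 1 ≠ 1 := by omega
    simp only [vsgn, pi20, pi02, psign, Fin.coe_castSucc, Fin.val_succ, hk, h1, if_neg,
      if_false]
    split_ifs <;> decide

lemma vsgn_rho {m : ℕ} (ord : ThreadEdge m → ℕ) (k : Fin m) :
    vsgn ord (rho02 (m := m)) k = -1 * vsgn ord (rho20 (m := m)) k := by
  simp only [vsgn, rho02, rho20, psign]
  split_ifs <;> decide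

end Aux

/-- Proposition 3.2.  Relative to any fixed (injective) ordering of the
edges of `T_m`: for odd `m ≥ 1`, `sgn(π_20) = sgn(π_02)`; for `m = 1`,
`sgn(π′_11) = −sgn(π_02)`; and for even `m ≥ 2`, `sgn(ρ_02) = sgn(ρ_20)`. -/
theorem statement7 :
    (∀ m : ℕ, Odd m → ∀ ord : ThreadEdge m → ℕ, Function.Injective ord →
      psgn ord (pi20 (m := m)) = psgn ord (pi02 (m := m))) ∧
    (∀ ord : ThreadEdge 1 → ℕ, Function.Injective ord →
      psgn ord (pi'11 (m := 1)) = - psgn ord (pi02 (m := 1))) ∧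
    (∀ m : ℕ, Even m → 2 ≤ m → ∀ ord : ThreadEdge m → ℕ, Function.Injective ord →
      psgn ord (rho02 (m := m)) = psgn ord (rho20 (m := m))) := by
  refine ⟨?_, ?_, ?_⟩
  · rintro m ⟨n, rfl⟩ ord _
    have key : ∀ k : Fin (2*n+1), vsgn ord (pi20 (m := 2*n+1)) k
        = (if (k : ℕ) = 0 then 1 else -1) * vsgn ord (pi02 (m := 2*n+1)) k := by
      intro k; exact vsgn_pi20_pi02 ord k
    unfold psgn
    rw [Finset.prod_congr rfl (fun k _ => key k), Finset.prod_mul_distrib]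
    have : (∏ k : Fin (2*n+1), (if (k : ℕ) = 0 then (1:ℤ) else -1)) = 1 := by
      rw [Fin.prod_univ_succ]
      simp [Fin.val_succ, Finset.prod_const, pow_mul]
    rw [this, one_mul]
  · intro ord _
    unfold psgn
    rw [Fin.prod_univ_one, Fin.prod_univ_one]
    norm_num [vsgn, pi'11, pi02, psign]
    split_ifs <;> decide
  · rintro m ⟨n, rfl⟩ _ ord _
    unfold psgn
    rw [Finset.prod_congr rfl (fun k _ => vsgn_rho ord k), Finset.prod_mul_distrib]
    simp only [Finset.prod_const, Finset.card_univ, Fintype.card_fin]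
    rw [Even.neg_one_pow ⟨n, rfl⟩, one_mul]
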